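/- arXiv:1409.8583 — 7 statements merged into one kernel-verified Lean document; each statement's English description precedes it below -/
import Mathlib

section
/- Let a > 0, 0 ≤ c ≤ 1, and let M = [[a, 0], [-c, 1]]. Then ((c/a) + 1)^2 / ((c/a) + (c/a^2) + 1) ≤ 4/3, with equality if and only if a = 1 and c = 1. -/
/-! Clearing the denominator, `4 (c/a + c/a² + 1) - 3 (c/a + 1)²` equals
`((a - c)² + 4 c (1 - c)) / a²`, whose numerator is a sum of two terms that are nonnegative
for `0 ≤ c ≤ 1`.
It vanishes exactly when `a = c` and `c ∈ {0, 1}`, and `a > 0` rules out `c = 0`. -/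

lemma four_mul_denom_sub_three_mul_sq {a : ℝ} (ha : a ≠ 0) (c : ℝ) :
    4 * (c / a + c / a ^ 2 + 1) - 3 * (c / a + 1) ^ 2 =
      ((a - c) ^ 2 + 4 * (c * (1 - c))) / a ^ 2 := by
  field_simp
  ring

lemma sq_sub_add_four_mul_mul_one_sub_nonneg (a : ℝ) {c : ℝ} (hc0 : 0 ≤ c) (hc1 : c ≤ 1) :
    0 ≤ (a - c) ^ 2 + 4 * (c * (1 - c)) := by
  have : 0 ≤ c * (1 - c) := mul_nonneg hc0 (sub_nonneg.mpr hc1)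
  positivity

lemma sq_sub_add_four_mul_mul_one_sub_eq_zero_iff {a c : ℝ} (ha : 0 < a) (hc0 : 0 ≤ c)
    (hc1 : c ≤ 1) : (a - c) ^ 2 + 4 * (c * (1 - c)) = 0 ↔ a = 1 ∧ c = 1 := by
  refine ⟨fun h => ?_, fun ⟨ha1, hc1⟩ => by simp [ha1, hc1]⟩
  have hprod : 0 ≤ c * (1 - c) := mul_nonneg hc0 (sub_nonneg.mpr hc1)
  obtain ⟨hsq, hcc⟩ := (add_eq_zero_iff_of_nonneg (sq_nonneg _) (by positivity)).mp h
  have hac : a = c := sub_eq_zero.mp (pow_eq_zero_iff two_ne_zero |>.mp hsq)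
  rcases mul_eq_zero.mp ((mul_eq_zero.mp hcc).resolve_left four_ne_zero) with hc | hc
  · exact absurd (hac.trans hc) ha.ne'
  · have hc : c = 1 := (sub_eq_zero.mp hc).symm
    exact ⟨hac.trans hc, hc⟩

theorem stmt_8 (a c : ℝ) (ha : 0 < a) (hc0 : 0 ≤ c) (hc1 : c ≤ 1) :
    (c / a + 1) ^ 2 / (c / a + c / a ^ 2 + 1) ≤ 4 / 3 ∧
      ((c / a + 1) ^ 2 / (c / a + c / a ^ 2 + 1) = 4 / 3 ↔ a = 1 ∧ c = 1) := by
  have hD : 0 < c / a + c / a ^ 2 + 1 := by positivity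
  have hgap := four_mul_denom_sub_three_mul_sq ha.ne' c
  have ha2 : a ^ 2 ≠ 0 := pow_ne_zero 2 ha.ne'
  constructor
  · rw [div_le_div_iff₀ hD three_pos]
    have := div_nonneg (sq_sub_add_four_mul_mul_one_sub_nonneg a hc0 hc1) (sq_nonneg a)
    linarith
  · rw [div_eq_div_iff hD.ne' three_ne_zero,
      ← sq_sub_add_four_mul_mul_one_sub_eq_zero_iff ha hc0 hc1,
      ← div_eq_zero_iff.trans (or_iff_left ha2), ← hgap]
    constructor <;> intro h <;> linarith
end

section
/- Every second-order two-stage diagonally implicit Runge–Kutta method has SSP coefficient r ≤ 4; equivalently, if r > 0, A ∈ ℝ^{2×2} is lower triangular, b ∈ ℝ^2 satisfy b^T e = 1, b^T A e = 1/2, and the absolute monotonicity conditions (I+rA invertible, (I+rA)^{-1} e ≥ 0, rA(I+rA)^{-1} ≥ 0, b^T(I+rA)^{-1} ≥ 0, 1 - r b^T (I+rA)^{-1} e ≥ 0), then r ≤ 4. -/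
open Matrix

/-!
Write `M = I + rA = !![u, 0; w, v]`. Since `rA M⁻¹ = I - M⁻¹`, absolute monotonicity forces
`1 ≤ u`, `1 ≤ v`, `0 ≤ w ≤ u`, `0 ≤ b₁` and `w b₁ ≤ v b₀`, and together with the order conditions
`b₀ + b₁ = 1`, `bᵀ M e = 1 + r/2` the last condition becomes `r (u + v - 1 - r/2) ≤ uv`, that is
`(r - u)(r - v) ≥ r (r - 2)/2`. For `r > 2` this product is positive while
`min u v ≤ b₀ u + b₁ v ≤ 1 + r/2 < r`, so `u, v < r`; the sign conditions also give
`u² + uv + v² ≥ (u + v)(1 + r/2)`, whence `u + v ≥ r`. Then by AM–GM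
`2r (r - 2) ≤ 4 (r - u)(r - v) ≤ (2r - u - v)² ≤ r²`, i.e. `r ≤ 4`.
-/

section
variable {n R : Type*} [Fintype n] [DecidableEq n] [CommRing R]

theorem smul_mul_inv_one_add_smul (A : Matrix n n R) (r : R) (h : IsUnit (1 + r • A).det) :
    (r • A) * (1 + r • A)⁻¹ = 1 - (1 + r • A)⁻¹ :=
  calc (r • A) * (1 + r • A)⁻¹ = ((1 + r • A) - 1) * (1 + r • A)⁻¹ := by rw [add_sub_cancel_left]
    _ = 1 - (1 + r • A)⁻¹ := by rw [sub_mul, mul_nonsing_inv _ h, one_mul]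

theorem dotProduct_one_add_smul_mulVec (A : Matrix n n R) (r : R) (b x : n → R) :
    b ⬝ᵥ (1 + r • A) *ᵥ x = b ⬝ᵥ x + r * (b ⬝ᵥ A *ᵥ x) := by
  rw [add_mulVec, one_mulVec, smul_mulVec, dotProduct_add, dotProduct_smul, smul_eq_mul]

end

section
variable {𝕜 : Type*} [Field 𝕜] {u v w : 𝕜}

theorem inv_lowerTriangular_fin_two (hu : u ≠ 0) (hv : v ≠ 0) :
    !![u, 0; w, v]⁻¹ = !![u⁻¹, 0; -(w / (u * v)), v⁻¹] := by
  refine inv_eq_left_inv ?_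
  ext i j
  fin_cases i <;> fin_cases j <;> simp [field]

theorem dotProduct_inv_lowerTriangular_fin_two_mulVec_one (hu : u ≠ 0) (hv : v ≠ 0)
    (b : Fin 2 → 𝕜) :
    b ⬝ᵥ (!![u, 0; w, v]⁻¹ *ᵥ fun _ => (1 : 𝕜)) = (b 0 * v + b 1 * (u - w)) / (u * v) := by
  rw [inv_lowerTriangular_fin_two hu hv]
  simp [mulVec, dotProduct, Fin.sum_univ_two, field, neg_add_eq_sub]

variable [LinearOrder 𝕜] [IsStrictOrderedRing 𝕜] {r b₀ b₁ : 𝕜}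

theorem one_le_of_inv_lowerTriangular_fin_two (hu : u ≠ 0) (hv : v ≠ 0)
    (he : ∀ i, 0 ≤ (!![u, 0; w, v]⁻¹ *ᵥ fun _ => (1 : 𝕜)) i)
    (hI : ∀ i j, 0 ≤ (1 - !![u, 0; w, v]⁻¹) i j) : 1 ≤ u ∧ 1 ≤ v ∧ 0 ≤ w ∧ w ≤ u := by
  rw [inv_lowerTriangular_fin_two hu hv] at he hI
  have hu₀ : 0 ≤ u⁻¹ := by simpa [mulVec, dotProduct, Fin.sum_univ_two] using he 0
  have hwv : w / (u * v) ≤ v⁻¹ := by simpa [mulVec, dotProduct, Fin.sum_univ_two] using he 1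
  have hu₁ : u⁻¹ ≤ 1 := by simpa using hI 0 0
  have hw : 0 ≤ w / (u * v) := by simpa using hI 1 0
  have hv₁ : v⁻¹ ≤ 1 := by simpa using hI 1 1
  have hu_pos : 0 < u := inv_nonneg.1 hu₀ |>.lt_of_ne (Ne.symm hu)
  have hv_pos : 0 < v := inv_nonneg.1 (hw.trans hwv) |>.lt_of_ne (Ne.symm hv)
  field_simp at hw hwv
  exact ⟨(inv_le_one₀ hu_pos).1 hu₁, (inv_le_one₀ hv_pos).1 hv₁, by simpa using hw, hwv⟩

theorem nonneg_of_inv_transpose_lowerTriangular_fin_two (hu : 0 < u) (hv : 0 < v)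
    {b : Fin 2 → 𝕜} (hb : ∀ i, 0 ≤ (!![u, 0; w, v]⁻¹ᵀ *ᵥ b) i) :
    0 ≤ b 1 ∧ w * b 1 ≤ v * b 0 := by
  rw [inv_lowerTriangular_fin_two hu.ne' hv.ne'] at hb
  have hwb : w / (u * v) * b 1 ≤ u⁻¹ * b 0 := by
    simpa [mulVec, dotProduct, Fin.sum_univ_two] using hb 0
  have hb₁ : 0 ≤ v⁻¹ * b 1 := by simpa [mulVec, dotProduct, Fin.sum_univ_two] using hb 1
  field_simp at hwb
  exact ⟨nonneg_of_mul_nonneg_right hb₁ (inv_pos.2 hv), hwb⟩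

theorem le_four_of_quadratic_bounds (hu : 1 ≤ u) (hv : 1 ≤ v)
    (hmin : min u v ≤ 1 + r / 2) (hquad : (u + v) * (1 + r / 2) ≤ u ^ 2 + u * v + v ^ 2)
    (hdet : r * (u + v - 1 - r / 2) ≤ u * v) : r ≤ 4 := by
  rcases le_or_gt r 2 with hr | hr
  · linarith
  have hprod : r * (r - 2) / 2 ≤ (r - u) * (r - v) := by linear_combination hdet
  have hlt : u < r ∧ v < r := by
    have hpos : 0 < (r - u) * (r - v) := by nlinarith
    rcases min_le_iff.1 hmin with h | h
    · exact ⟨by linarith, by nlinarith⟩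
    · exact ⟨by nlinarith, by linarith⟩
  have hsum : r ≤ u + v := by
    -- `hquad` and `hdet` combine to `(u + v - r) (u + v - 1 - r/2) ≥ 0`.
    have h1 : 1 + r / 2 < u + v := by nlinarith [mul_nonneg (sub_nonneg.2 hu) (sub_nonneg.2 hv)]
    nlinarith
  nlinarith [sq_nonneg (u - v)]

theorem le_four_of_lowerTriangular_coeffs (hu : 1 ≤ u) (hv : 1 ≤ v)
    (hw : 0 ≤ w) (hwu : w ≤ u) (hb₁ : 0 ≤ b₁) (hwb : w * b₁ ≤ v * b₀)
    (hsum : b₀ + b₁ = 1) (horder : b₀ * u + b₁ * (w + v) = 1 + r / 2)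
    (habs : r * (b₀ * v + b₁ * (u - w)) ≤ u * v) : r ≤ 4 := by
  have hb₀ : 0 ≤ b₀ := nonneg_of_mul_nonneg_right (by nlinarith) (by linarith : (0 : 𝕜) < v)
  refine le_four_of_quadratic_bounds hu hv ?_ ?_ ?_
  · calc min u v = b₀ * min u v + b₁ * min u v := by linear_combination -(min u v) * hsum
      _ ≤ b₀ * u + b₁ * v := by gcongr; exacts [min_le_left u v, min_le_right u v]
      _ ≤ 1 + r / 2 := by linarith [mul_nonneg hb₁ hw]
  · have hgap : u ^ 2 + u * v + v ^ 2 - (u + v) * (1 + r / 2)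
        = u * (b₁ * (u - w)) + v * (v * b₀ - w * b₁) := by
      linear_combination -(u ^ 2 + u * v + v ^ 2) * hsum + (u + v) * horder
    have hgap_nonneg := add_nonneg
      (mul_nonneg (by linarith : 0 ≤ u) (mul_nonneg hb₁ (sub_nonneg.2 hwu)))
      (mul_nonneg (by linarith : 0 ≤ v) (sub_nonneg.2 hwb))
    linarith
  · have htrace : b₀ * v + b₁ * (u - w) = u + v - 1 - r / 2 := by
      linear_combination (u + v) * hsum - horder
    rwa [htrace] at habs

end

theorem stmt_10_general (A : Matrix (Fin 2) (Fin 2) ℝ) (b : Fin 2 → ℝ) (r : ℝ)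
    (hlow : ∀ i j, i < j → A i j = 0)
    (hoc1 : b ⬝ᵥ (fun _ => (1 : ℝ)) = 1)
    (hoc2 : b ⬝ᵥ A.mulVec (fun _ => (1 : ℝ)) = 1 / 2)
    (hN : IsUnit (1 + r • A).det)
    (ham1 : ∀ i, 0 ≤ (1 + r • A)⁻¹.mulVec (fun _ => (1 : ℝ)) i)
    (ham2 : ∀ i j, 0 ≤ ((r • A) * (1 + r • A)⁻¹) i j)
    (ham3 : ∀ i, 0 ≤ ((1 + r • A)⁻¹ᵀ.mulVec b) i)
    (ham4 : 0 ≤ 1 - r * (b ⬝ᵥ (1 + r • A)⁻¹.mulVec (fun _ => (1 : ℝ)))) :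
    r ≤ 4 := by
  rw [smul_mul_inv_one_add_smul A r hN] at ham2
  have hMe := dotProduct_one_add_smul_mulVec A r b fun _ => 1
  rw [hoc1, hoc2] at hMe
  have hM₀₁ : (1 + r • A) 0 1 = 0 := by simp [hlow 0 1 (by decide)]
  obtain ⟨u, v, w, hM⟩ : ∃ u v w : ℝ, 1 + r • A = !![u, 0; w, v] :=
    ⟨_, _, _, (eta_fin_two _).trans (by rw [hM₀₁])⟩
  rw [hM] at hN ham1 ham2 ham3 ham4 hMe
  obtain ⟨hu, hv⟩ : u ≠ 0 ∧ v ≠ 0 := by simpa [det_fin_two_of] using hN.ne_zero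
  obtain ⟨hu₁, hv₁, hw, hwu⟩ := one_le_of_inv_lowerTriangular_fin_two hu hv ham1 ham2
  obtain ⟨hb₁, hwb⟩ :=
    nonneg_of_inv_transpose_lowerTriangular_fin_two (by linarith) (by linarith) ham3
  rw [sub_nonneg, dotProduct_inv_lowerTriangular_fin_two_mulVec_one hu hv, mul_div_assoc',
    div_le_one (by nlinarith)] at ham4
  have hsum : b 0 + b 1 = 1 := by simpa [dotProduct, Fin.sum_univ_two] using hoc1
  have horder : b 0 * u + b 1 * (w + v) = 1 + r / 2 := by
    simpa [mulVec, dotProduct, Fin.sum_univ_two, div_eq_mul_inv] using hMe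
  exact le_four_of_lowerTriangular_coeffs hu₁ hv₁ hw hwu hb₁ hwb hsum horder ham4

theorem stmt_10 (A : Matrix (Fin 2) (Fin 2) ℝ) (b : Fin 2 → ℝ) (r : ℝ)
    (hr : 0 < r)
    (hlow : ∀ i j, i < j → A i j = 0)
    (hoc1 : b ⬝ᵥ (fun _ => (1 : ℝ)) = 1)
    (hoc2 : b ⬝ᵥ A.mulVec (fun _ => (1 : ℝ)) = 1 / 2)
    (hN : IsUnit (1 + r • A).det)
    (ham1 : ∀ i, 0 ≤ (1 + r • A)⁻¹.mulVec (fun _ => (1 : ℝ)) i)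
    (ham2 : ∀ i j, 0 ≤ ((r • A) * (1 + r • A)⁻¹) i j)
    (ham3 : ∀ i, 0 ≤ ((1 + r • A)⁻¹ᵀ.mulVec b) i)
    (ham4 : 0 ≤ 1 - r * (b ⬝ᵥ (1 + r • A)⁻¹.mulVec (fun _ => (1 : ℝ)))) :
    r ≤ 4 :=
  stmt_10_general A b r hlow hoc1 hoc2 hN ham1 ham2 ham3 ham4
end

section
/- Let s ≥ 2 be an integer and α, β ≥ 0 real numbers with β > 0 or α = 0, satisfying α^2 ≤ (2(s-1)/s)·β. Then (1+α)^2/(1+α+β) ≤ 2s/(s+1). -/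
theorem stmt_12 (s : ℕ) (hs : 2 ≤ s) (α β : ℝ) (hα : 0 ≤ α) (hβ : 0 ≤ β)
    (hne : 0 < β ∨ α = 0)
    (h : α ^ 2 ≤ 2 * ((s : ℝ) - 1) / s * β) :
    (1 + α) ^ 2 / (1 + α + β) ≤ 2 * s / (s + 1) := by
  have ht : (2:ℝ) ≤ s := by exact_mod_cast hs
  have ht0 : (0:ℝ) < s := by linarith
  have hd : 0 < 1 + α + β := by linarith
  have hs1 : 0 < (s:ℝ) + 1 := by linarith
  have h' : (s:ℝ) * α ^ 2 ≤ 2 * ((s:ℝ) - 1) * β := by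
    have h2 := mul_le_mul_of_nonneg_left h ht0.le
    have he : (s:ℝ) * (2 * ((s:ℝ) - 1) / s * β) = 2 * ((s:ℝ) - 1) * β := by
      field_simp
    linarith [he ▸ h2]
  rw [div_le_div_iff₀ hd hs1]
  nlinarith [sq_nonneg (α - ((s:ℝ) - 1)), sq_nonneg α, mul_nonneg hα hβ]
end

section
/- For s ≥ 2, the function g(α) = (1+α)^2 / (1 + α + (s/(2(s-1)))α^2) on [0, ∞) attains its global maximum at α = s-1 with value 2s/(s+1). -/
/-! With `D(α) = 1 + α + t / (2(t-1)) α²`, one has the identity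
`2t D(α) - (t+1)(1+α)² = (α - (t-1))² / (t-1)`, so `(1+α)² / D(α) ≤ 2t/(t+1)` for every real `α`
(the quadratic `D` has negative discriminant when `t > 1`), with equality exactly at `α = t - 1`. -/

namespace PeakRatio

variable {t : ℝ}

lemma denom_pos (ht : 1 < t) (α : ℝ) : 0 < 1 + α + t / (2 * (t - 1)) * α ^ 2 := by
  have hc : 1 / 2 ≤ t / (2 * (t - 1)) := by
    rw [div_le_div_iff₀ two_pos (by linarith)]
    linarith
  nlinarith [sq_nonneg (1 + α), sq_nonneg α]

lemma two_mul_denom_sub (ht : 1 < t) (α : ℝ) :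
    2 * t * (1 + α + t / (2 * (t - 1)) * α ^ 2) - (t + 1) * (1 + α) ^ 2
      = (α - (t - 1)) ^ 2 / (t - 1) := by
  have : t - 1 ≠ 0 := by linarith
  field_simp
  ring

lemma ratio_le (ht : 1 < t) (α : ℝ) :
    (1 + α) ^ 2 / (1 + α + t / (2 * (t - 1)) * α ^ 2) ≤ 2 * t / (t + 1) := by
  rw [div_le_div_iff₀ (denom_pos ht α) (by linarith)]
  have hgap := two_mul_denom_sub ht α
  have : 0 ≤ (α - (t - 1)) ^ 2 / (t - 1) := div_nonneg (sq_nonneg _) (by linarith)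
  linarith

lemma ratio_at_peak (ht : 1 < t) :
    (1 + (t - 1)) ^ 2 / (1 + (t - 1) + t / (2 * (t - 1)) * (t - 1) ^ 2) = 2 * t / (t + 1) := by
  have hD := denom_pos ht (t - 1)
  rw [div_eq_div_iff hD.ne' (by linarith)]
  have hgap := two_mul_denom_sub ht (t - 1)
  rw [sub_self, zero_pow two_ne_zero, zero_div] at hgap
  linarith

end PeakRatio

theorem stmt_13 (s : ℕ) (hs : 2 ≤ s) :
    let g : ℝ → ℝ := fun α => (1 + α) ^ 2 / (1 + α + (s : ℝ) / (2 * ((s : ℝ) - 1)) * α ^ 2)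
    (∀ α, 0 ≤ α → g α ≤ g ((s : ℝ) - 1)) ∧ g ((s : ℝ) - 1) = 2 * s / (s + 1) := by
  intro g
  have hs1 : (1 : ℝ) < s := by exact_mod_cast hs
  have hpeak : g ((s : ℝ) - 1) = 2 * s / (s + 1) := PeakRatio.ratio_at_peak hs1
  exact ⟨fun α _ => hpeak ▸ PeakRatio.ratio_le hs1 α, hpeak⟩
end

section
/- Let s ≥ 1 and suppose for all k < s the following holds: for any k×k lower triangular invertible matrix M with M e ≥ 0, off-diagonal entries ≤ 0, and any probability vector w ∈ ℝ^k, (w^T M^{-1} e)^2/(w^T M^{-2} e) ≤ 2k/(k+1). Then the same holds for s, i.e. for any s×s lower triangular invertible M with M e ≥ 0 and off-diagonal entries ≤ 0 and any probability vector w ∈ ℝ^s, (w^T M^{-1} e)^2/(w^T M^{-2} e) ≤ 2s/(s+1). -/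
open Matrix Finset

/-!
Put `u = M⁻¹ e` and `v = M⁻² e`. Since `w` is a probability vector, Cauchy–Schwarz gives
`(wᵀu)² ≤ ∑ wᵢ uᵢ²`, so it suffices to prove `(s + 1) uᵢ² ≤ 2 s vᵢ` for every `i`.
With `γⱼ = -Mᵢⱼ ≥ 0` for `j < i`, row `i` of `M u = e` and `M v = u` reads
`Mᵢᵢ uᵢ = 1 + A` and `Mᵢᵢ vᵢ = uᵢ + B`, where `A = ∑ γⱼ uⱼ` and `B = ∑ γⱼ vⱼ`.
The leading `i × i` block of `M` satisfies the same hypotheses, and its `M⁻¹ e` and `M⁻² e`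
are the restrictions of `u` and `v`; so the hypothesis in dimension `i`, applied to the
probability vector `γ / ∑ γ`, gives `(i + 1) A² ≤ 2 i (∑ γ) B ≤ 2 i Mᵢᵢ B`, the last step
being `M e ≥ 0`. An elementary quadratic inequality in `A` turns this into the pointwise bound.
-/

lemma sq_dotProduct_le_sum_mul_sq {ι : Type*} [Fintype ι] {w : ι → ℝ} (hw : ∀ i, 0 ≤ w i)
    (hw1 : ∑ i, w i = 1) (u : ι → ℝ) : (w ⬝ᵥ u) ^ 2 ≤ ∑ i, w i * u i ^ 2 := by
  have := sum_sq_le_sum_mul_sum_of_sq_le_mul univ (r := fun i => w i * u i) (f := w)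
    (g := fun i => w i * u i ^ 2) (fun i _ => hw i) (fun i _ => mul_nonneg (hw i) (sq_nonneg _))
    (fun i _ => (by ring : (w i * u i) ^ 2 = _).le)
  rwa [hw1, one_mul] at this

lemma Matrix.mulVec_apply_eq_diag_add_sum_erase {ι R : Type*} [Fintype ι] [DecidableEq ι]
    [NonUnitalNonAssocSemiring R] (M : Matrix ι ι R) (x : ι → R) (i : ι) :
    (M *ᵥ x) i = M i i * x i + ∑ j ∈ univ.erase i, M i j * x j :=
  (add_sum_erase _ _ (mem_univ i)).symm

lemma Fin.sum_castLE_eq_sum_univ {R : Type*} [AddCommMonoid R] {k n : ℕ} (h : k ≤ n)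
    {f : Fin n → R} (hf : ∀ j : Fin n, k ≤ (j : ℕ) → f j = 0) :
    ∑ a : Fin k, f (a.castLE h) = ∑ j, f j := by
  refine (sum_map univ (Fin.castLEEmb h) f).symm.trans ?_
  refine sum_subset (subset_univ _) fun j _ hj => hf j (not_lt.mp fun hjk => hj ?_)
  exact mem_map.mpr ⟨⟨j, hjk⟩, mem_univ _, rfl⟩

namespace Matrix.IsLowerTriangular

variable {R : Type*} [NonUnitalNonAssocSemiring R] {n : ℕ} {M : Matrix (Fin n) (Fin n) R}

lemma submatrix_castLE_mulVec (hM : M.IsLowerTriangular) {k : ℕ} (h : k ≤ n)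
    (x : Fin n → R) :
    M.submatrix (Fin.castLE h) (Fin.castLE h) *ᵥ (x ∘ Fin.castLE h) =
      (M *ᵥ x) ∘ Fin.castLE h := by
  funext a
  refine Fin.sum_castLE_eq_sum_univ h (f := fun j => M (a.castLE h) j * x j) fun j hj => ?_
  have hlt : a.castLE h < j := Fin.lt_def.mpr (lt_of_lt_of_le a.isLt hj)
  exact mul_eq_zero_of_left (hM hlt) _

lemma mulVec_apply_eq_sum_castLE_add (hM : M.IsLowerTriangular) (x : Fin n → R) (i : Fin n) :
    (M *ᵥ x) i =
      ∑ a : Fin i, M i (a.castLE i.isLt.le) * x (a.castLE i.isLt.le) + M i i * x i := by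
  rw [mulVec, dotProduct, ← Fin.sum_castLE_eq_sum_univ (Nat.succ_le_of_lt i.isLt),
    Fin.sum_univ_castSucc]
  · rfl
  · intro j hj
    exact mul_eq_zero_of_left (hM (show i < j from hj)) _

end Matrix.IsLowerTriangular

structure IsLowerTriangularZMatrix {ι : Type*} [Fintype ι] [LinearOrder ι]
    (M : Matrix ι ι ℝ) : Prop where
  lowerTriangular : M.IsLowerTriangular
  isUnit_det : IsUnit M.det
  rowSum_nonneg : ∀ i, 0 ≤ (M *ᵥ fun _ => (1 : ℝ)) i
  offDiag_nonpos : ∀ i j, i ≠ j → M i j ≤ 0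

namespace IsLowerTriangularZMatrix

section LinearOrder

variable {ι : Type*} [Fintype ι] [LinearOrder ι] {M : Matrix ι ι ℝ}

lemma diag_pos (hM : IsLowerTriangularZMatrix M) (i : ι) : 0 < M i i := by
  have hrest : ∑ j ∈ univ.erase i, M i j * 1 ≤ 0 :=
    sum_nonpos fun j hj => by simpa using hM.offDiag_nonpos i j (ne_of_mem_erase hj).symm
  have hnonneg : 0 ≤ M i i := by
    have := hM.rowSum_nonneg i
    rw [mulVec_apply_eq_diag_add_sum_erase] at this
    linarith
  have hdet := hM.isUnit_det.ne_zero
  rw [det_of_isLowerTriangular M hM.lowerTriangular] at hdet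
  exact hnonneg.lt_of_ne (prod_ne_zero_iff.mp hdet i (mem_univ i)).symm

lemma pos_of_mulVec_eq (hM : IsLowerTriangularZMatrix M) {x b : ι → ℝ} (hx : M *ᵥ x = b)
    (hb : ∀ i, 0 < b i) (i : ι) : 0 < x i := by
  induction i using WellFoundedLT.induction with | ind i ih => ?_
  have hrest : ∑ j ∈ univ.erase i, M i j * x j ≤ 0 := by
    refine sum_nonpos fun j hj => ?_
    rcases (ne_of_mem_erase hj).lt_or_gt with hji | hij
    · exact mul_nonpos_of_nonpos_of_nonneg (hM.offDiag_nonpos i j hji.ne') (ih j hji).le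
    · rw [hM.lowerTriangular hij, zero_mul]
  have hrow := congrFun hx i
  rw [mulVec_apply_eq_diag_add_sum_erase] at hrow
  exact pos_of_mul_pos_right (by linarith [hb i]) (hM.diag_pos i).le

lemma inv_mulVec_pos (hM : IsLowerTriangularZMatrix M) {b : ι → ℝ} (hb : ∀ i, 0 < b i)
    (i : ι) : 0 < (M⁻¹ *ᵥ b) i :=
  hM.pos_of_mulVec_eq (by rw [mulVec_mulVec, mul_nonsing_inv M hM.isUnit_det, one_mulVec]) hb i

end LinearOrder

variable {n k : ℕ} {M : Matrix (Fin n) (Fin n) ℝ}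

lemma submatrix_castLE (hM : IsLowerTriangularZMatrix M) (h : k ≤ n) :
    IsLowerTriangularZMatrix (M.submatrix (Fin.castLE h) (Fin.castLE h)) := by
  have hL : (M.submatrix (Fin.castLE h) (Fin.castLE h)).IsLowerTriangular :=
    fun _ _ hab => hM.lowerTriangular hab
  refine ⟨hL, ?_, fun a => ?_, fun a b hab => ?_⟩
  · rw [det_of_isLowerTriangular _ hL]
    exact (prod_pos fun a _ => hM.diag_pos _).ne'.isUnit
  · exact (hM.rowSum_nonneg _).trans_eq
      (congrFun (hM.lowerTriangular.submatrix_castLE_mulVec h fun _ => 1) a).symm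
  · exact hM.offDiag_nonpos _ _ ((Fin.castLE_injective h).ne hab)

lemma submatrix_castLE_inv_mulVec (hM : IsLowerTriangularZMatrix M) (h : k ≤ n)
    (b : Fin n → ℝ) :
    (M.submatrix (Fin.castLE h) (Fin.castLE h))⁻¹ *ᵥ (b ∘ Fin.castLE h) =
      (M⁻¹ *ᵥ b) ∘ Fin.castLE h := by
  have hMx : M *ᵥ (M⁻¹ *ᵥ b) = b := by
    rw [mulVec_mulVec, mul_nonsing_inv M hM.isUnit_det, one_mulVec]
  rw [← hMx, ← hM.lowerTriangular.submatrix_castLE_mulVec h, mulVec_mulVec,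
    nonsing_inv_mul _ (hM.submatrix_castLE h).isUnit_det, one_mulVec, hMx]

end IsLowerTriangularZMatrix

def RatioBound (k : ℕ) : Prop :=
  ∀ M : Matrix (Fin k) (Fin k) ℝ, ∀ w : Fin k → ℝ,
    (∀ i j, i < j → M i j = 0) → IsUnit M.det →
    (∀ i, 0 ≤ M.mulVec (fun _ => (1 : ℝ)) i) →
    (∀ i j, i ≠ j → M i j ≤ 0) →
    (∀ i, 0 ≤ w i) → w ⬝ᵥ (fun _ => (1 : ℝ)) = 1 →
    0 < w ⬝ᵥ (M⁻¹ * M⁻¹).mulVec (fun _ => (1 : ℝ)) →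
    (w ⬝ᵥ M⁻¹.mulVec (fun _ => (1 : ℝ))) ^ 2 /
      (w ⬝ᵥ (M⁻¹ * M⁻¹).mulVec (fun _ => (1 : ℝ))) ≤ 2 * k / (k + 1)

lemma RatioBound.mul_sq_le {k : ℕ} (hk : RatioBound k) {M : Matrix (Fin k) (Fin k) ℝ}
    (hM : IsLowerTriangularZMatrix M) {c : Fin k → ℝ} (hc : ∀ i, 0 ≤ c i) :
    (k + 1) * (c ⬝ᵥ M⁻¹ *ᵥ fun _ => 1) ^ 2 ≤
      2 * k * (∑ i, c i) * (c ⬝ᵥ (M⁻¹ * M⁻¹) *ᵥ fun _ => 1) := by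
  set A := c ⬝ᵥ M⁻¹ *ᵥ fun _ => 1
  set B := c ⬝ᵥ (M⁻¹ * M⁻¹) *ᵥ fun _ => 1
  set t := ∑ i, c i
  rcases (sum_nonneg fun i _ => hc i : 0 ≤ t).eq_or_lt with ht | ht
  · have hc0 : c = 0 := (Fintype.sum_eq_zero_iff_of_nonneg hc).mp ht.symm
    simp [A, B, hc0]
  have hv (j : Fin k) : 0 < ((M⁻¹ * M⁻¹) *ᵥ fun _ => 1) j := by
    rw [← mulVec_mulVec]
    exact hM.inv_mulVec_pos (hM.inv_mulVec_pos fun _ => one_pos) j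
  have hB : 0 < B := by
    obtain ⟨i, -, hi⟩ := exists_lt_of_sum_lt (f := 0) (g := c) (by simpa using ht)
    exact sum_pos' (fun j _ => mul_nonneg (hc j) (hv j).le) ⟨i, mem_univ i, mul_pos hi (hv i)⟩
  have hw1 : t⁻¹ • c ⬝ᵥ (fun _ => (1 : ℝ)) = 1 := by
    simp only [dotProduct, Pi.smul_apply, smul_eq_mul, mul_one, ← mul_sum]
    exact inv_mul_cancel₀ ht.ne'
  have hbound := hk M (t⁻¹ • c) (fun _ _ h => hM.lowerTriangular h) hM.isUnit_det
    hM.rowSum_nonneg hM.offDiag_nonpos (fun i => smul_nonneg (inv_nonneg.mpr ht.le) (hc i)) hw1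
    (by rw [smul_dotProduct]; exact smul_pos (inv_pos.mpr ht) hB)
  rw [smul_dotProduct, smul_dotProduct] at hbound
  change (t⁻¹ * A) ^ 2 / (t⁻¹ * B) ≤ 2 * k / (k + 1) at hbound
  rw [div_le_div_iff₀ (by positivity) (by positivity)] at hbound
  have ht0 : t ≠ 0 := ht.ne'
  calc (k + 1) * A ^ 2 = t ^ 2 * ((t⁻¹ * A) ^ 2 * (k + 1)) := by field_simp
    _ ≤ t ^ 2 * (2 * k * (t⁻¹ * B)) := by gcongr
    _ = 2 * k * t * B := by field_simp

lemma add_one_mul_sq_le_of_step {κ σ m t u v A B : ℝ} (hκ : 0 ≤ κ) (hσ : κ + 1 ≤ σ)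
    (hm : 0 < m) (hA : 0 ≤ A) (hB : 0 ≤ B) (ht : t ≤ m) (hu : m * u = 1 + A)
    (hv : m * v = u + B) (hAB : (κ + 1) * A ^ 2 ≤ 2 * κ * t * B) :
    (σ + 1) * u ^ 2 ≤ 2 * σ * v := by
  have hP : (κ + 1) * A ^ 2 ≤ 2 * κ * (m * B) := by
    calc (κ + 1) * A ^ 2 ≤ 2 * κ * t * B := hAB
      _ ≤ 2 * κ * m * B := by gcongr
      _ = 2 * κ * (m * B) := by ring
  -- for `κ > 0`, `κ * (rhs - lhs) ≥ (κ - A) ^ 2 + (σ - κ - 1) * (κ + A ^ 2)` by `hP`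
  have key : (σ + 1) * (1 + A) ^ 2 ≤ 2 * σ * (1 + A) + 2 * σ * (m * B) := by
    rcases hκ.eq_or_lt with rfl | hκ
    · have hA0 : A = 0 := by nlinarith
      subst hA0
      nlinarith [mul_nonneg hm.le hB]
    · refine le_of_mul_le_mul_left ?_ hκ
      nlinarith [sq_nonneg (κ - A),
        mul_nonneg (sub_nonneg.mpr hσ) (add_nonneg hκ.le (sq_nonneg A)),
        mul_le_mul_of_nonneg_left hP (show 0 ≤ σ by linarith)]
  refine le_of_mul_le_mul_left ?_ (pow_pos hm 2)
  calc m ^ 2 * ((σ + 1) * u ^ 2) = (σ + 1) * (m * u) ^ 2 := by ring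
    _ ≤ 2 * σ * (m * u) + 2 * σ * (m * B) := by rw [hu]; exact key
    _ = m ^ 2 * (2 * σ * v) := by linear_combination (-2 * σ * m) * hv

lemma IsLowerTriangularZMatrix.mul_sq_inv_mulVec_le {n : ℕ} (ih : ∀ k < n, RatioBound k)
    {M : Matrix (Fin n) (Fin n) ℝ} (hM : IsLowerTriangularZMatrix M) (i : Fin n) :
    (n + 1) * (M⁻¹ *ᵥ fun _ => 1) i ^ 2 ≤ 2 * n * ((M⁻¹ * M⁻¹) *ᵥ fun _ => 1) i := by
  set u := M⁻¹ *ᵥ fun _ => (1 : ℝ)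
  rw [← mulVec_mulVec]
  set v := M⁻¹ *ᵥ u
  have hMu : M *ᵥ u = fun _ => 1 := by
    rw [mulVec_mulVec, mul_nonsing_inv M hM.isUnit_det, one_mulVec]
  have hMv : M *ᵥ v = u := by
    rw [mulVec_mulVec, mul_nonsing_inv M hM.isUnit_det, one_mulVec]
  have hu_pos : ∀ j, 0 < u j := hM.inv_mulVec_pos fun _ => one_pos
  have hv_pos : ∀ j, 0 < v j := hM.inv_mulVec_pos hu_pos
  have h : (i : ℕ) ≤ n := i.isLt.le
  set γ : Fin i → ℝ := fun a => -M i (a.castLE h)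
  have hγ (a : Fin i) : 0 ≤ γ a :=
    neg_nonneg.mpr (hM.offDiag_nonpos _ _ (Fin.ne_of_gt a.isLt))
  have hrow (x : Fin n → ℝ) : M i i * x i = (M *ᵥ x) i + γ ⬝ᵥ (x ∘ Fin.castLE h) := by
    simp [hM.lowerTriangular.mulVec_apply_eq_sum_castLE_add x i, γ, dotProduct]
  set M' := M.submatrix (Fin.castLE h) (Fin.castLE h)
  have hu' : M'⁻¹ *ᵥ (fun _ => 1) = u ∘ Fin.castLE h :=
    hM.submatrix_castLE_inv_mulVec h fun _ => 1
  have hv' : (M'⁻¹ * M'⁻¹) *ᵥ (fun _ => 1) = v ∘ Fin.castLE h := by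
    rw [← mulVec_mulVec, hu', hM.submatrix_castLE_inv_mulVec]
  have hIH := (ih i i.isLt).mul_sq_le (hM.submatrix_castLE h) hγ
  rw [hu', hv'] at hIH
  refine add_one_mul_sq_le_of_step (Nat.cast_nonneg _) (by exact_mod_cast i.isLt)
    (hM.diag_pos i) ?_ ?_ ?_ (by rw [hrow, hMu]) (by rw [hrow, hMv]) hIH
  · exact dotProduct_nonneg_of_nonneg hγ fun a => (hu_pos _).le
  · exact dotProduct_nonneg_of_nonneg hγ fun a => (hv_pos _).le
  · have hsum := hrow fun _ => 1
    simp only [mul_one, dotProduct, Function.comp_apply] at hsum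
    linarith [hM.rowSum_nonneg i]

theorem stmt_16_general (s : ℕ)
    (ih : ∀ k, k < s → ∀ M : Matrix (Fin k) (Fin k) ℝ, ∀ w : Fin k → ℝ,
      (∀ i j, i < j → M i j = 0) → IsUnit M.det →
      (∀ i, 0 ≤ M.mulVec (fun _ => (1 : ℝ)) i) →
      (∀ i j, i ≠ j → M i j ≤ 0) →
      (∀ i, 0 ≤ w i) → w ⬝ᵥ (fun _ => (1 : ℝ)) = 1 →
      0 < w ⬝ᵥ (M⁻¹ * M⁻¹).mulVec (fun _ => (1 : ℝ)) →
      (w ⬝ᵥ M⁻¹.mulVec (fun _ => (1 : ℝ))) ^ 2 /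
          (w ⬝ᵥ (M⁻¹ * M⁻¹).mulVec (fun _ => (1 : ℝ))) ≤ 2 * k / (k + 1)) :
    ∀ M : Matrix (Fin s) (Fin s) ℝ, ∀ w : Fin s → ℝ,
      (∀ i j, i < j → M i j = 0) → IsUnit M.det →
      (∀ i, 0 ≤ M.mulVec (fun _ => (1 : ℝ)) i) →
      (∀ i j, i ≠ j → M i j ≤ 0) →
      (∀ i, 0 ≤ w i) → w ⬝ᵥ (fun _ => (1 : ℝ)) = 1 →
      0 < w ⬝ᵥ (M⁻¹ * M⁻¹).mulVec (fun _ => (1 : ℝ)) →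
      (w ⬝ᵥ M⁻¹.mulVec (fun _ => (1 : ℝ))) ^ 2 /
          (w ⬝ᵥ (M⁻¹ * M⁻¹).mulVec (fun _ => (1 : ℝ))) ≤ 2 * s / (s + 1) := by
  intro M w hlt hdet hMe hoff hw hw1 hden
  have hM : IsLowerTriangularZMatrix M := ⟨fun _ _ h => hlt _ _ h, hdet, hMe, hoff⟩
  set u := M⁻¹ *ᵥ fun _ => (1 : ℝ)
  set v := (M⁻¹ * M⁻¹) *ᵥ fun _ => (1 : ℝ)
  rw [div_le_iff₀ hden]
  calc (w ⬝ᵥ u) ^ 2 ≤ ∑ j, w j * u j ^ 2 :=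
        sq_dotProduct_le_sum_mul_sq hw (by simpa [dotProduct] using hw1) u
    _ ≤ ∑ j, w j * (2 * s / (s + 1) * v j) := by
      refine sum_le_sum fun j _ => mul_le_mul_of_nonneg_left ?_ (hw j)
      rw [div_mul_eq_mul_div, le_div_iff₀ (by positivity)]
      linarith [hM.mul_sq_inv_mulVec_le ih j]
    _ = 2 * s / (s + 1) * (w ⬝ᵥ v) := by
      rw [dotProduct, mul_sum]
      exact sum_congr rfl fun j _ => by ring

theorem stmt_16 (s : ℕ) (hs : 1 ≤ s)
    (ih : ∀ k, k < s → ∀ M : Matrix (Fin k) (Fin k) ℝ, ∀ w : Fin k → ℝ,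
      (∀ i j, i < j → M i j = 0) → IsUnit M.det →
      (∀ i, 0 ≤ M.mulVec (fun _ => (1 : ℝ)) i) →
      (∀ i j, i ≠ j → M i j ≤ 0) →
      (∀ i, 0 ≤ w i) → w ⬝ᵥ (fun _ => (1 : ℝ)) = 1 →
      0 < w ⬝ᵥ (M⁻¹ * M⁻¹).mulVec (fun _ => (1 : ℝ)) →
      (w ⬝ᵥ M⁻¹.mulVec (fun _ => (1 : ℝ))) ^ 2 /
          (w ⬝ᵥ (M⁻¹ * M⁻¹).mulVec (fun _ => (1 : ℝ))) ≤ 2 * k / (k + 1)) :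
    ∀ M : Matrix (Fin s) (Fin s) ℝ, ∀ w : Fin s → ℝ,
      (∀ i j, i < j → M i j = 0) → IsUnit M.det →
      (∀ i, 0 ≤ M.mulVec (fun _ => (1 : ℝ)) i) →
      (∀ i j, i ≠ j → M i j ≤ 0) →
      (∀ i, 0 ≤ w i) → w ⬝ᵥ (fun _ => (1 : ℝ)) = 1 →
      0 < w ⬝ᵥ (M⁻¹ * M⁻¹).mulVec (fun _ => (1 : ℝ)) →
      (w ⬝ᵥ M⁻¹.mulVec (fun _ => (1 : ℝ))) ^ 2 /
          (w ⬝ᵥ (M⁻¹ * M⁻¹).mulVec (fun _ => (1 : ℝ))) ≤ 2 * s / (s + 1) :=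
  stmt_16_general s ih
end

section
/- If r > 0 satisfies the second-order conditions b^T e = 1, b^T A e = 1/2 and the absolute monotonicity conditions (I+rA invertible, (I+rA)^{-1}e ≥ 0, rA(I+rA)^{-1} ≥ 0, b^T(I+rA)^{-1} ≥ 0, 1 - r b^T(I+rA)^{-1}e ≥ 0) for an s-stage diagonally implicit Runge–Kutta method (A lower triangular), then r ≤ 2s. -/
open Matrix

section JokAux

open Finset

/-- Triple invariant: values `(f(1), f'(1), f''(1))` of an "absolutely monotone"
function with `f'' f - f'^2 - 2 f f' + C f^2 ≥ 0`. -/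
def Jok (C a b c : ℝ) : Prop :=
  0 ≤ a ∧ 0 ≤ b ∧ 0 ≤ c ∧ b ^ 2 + 2 * a * b ≤ c * a + C * a ^ 2

lemma Jok.zero (C : ℝ) : Jok C 0 0 0 := ⟨le_rfl, le_rfl, le_rfl, by norm_num⟩

lemma Jok.const {C y : ℝ} (hC : 0 ≤ C) (hy : 0 ≤ y) : Jok C y 0 0 :=
  ⟨hy, le_rfl, le_rfl, by nlinarith [sq_nonneg y]⟩

lemma Jok.mono {C C' a b c : ℝ} (h : Jok C a b c) (hCC : C ≤ C') : Jok C' a b c := by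
  obtain ⟨ha, hb, hc, hJ⟩ := h
  exact ⟨ha, hb, hc, by nlinarith [sq_nonneg a]⟩

lemma Jok.smul {C a b c t : ℝ} (ht : 0 ≤ t) (h : Jok C a b c) :
    Jok C (t * a) (t * b) (t * c) := by
  obtain ⟨ha, hb, hc, hJ⟩ := h
  refine ⟨mul_nonneg ht ha, mul_nonneg ht hb, mul_nonneg ht hc, ?_⟩
  nlinarith [mul_nonneg (mul_nonneg ht ht) (sub_nonneg.2 hJ)]

lemma Jok.add {C a₁ b₁ c₁ a₂ b₂ c₂ : ℝ} (h₁ : Jok C a₁ b₁ c₁) (h₂ : Jok C a₂ b₂ c₂) :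
    Jok C (a₁ + a₂) (b₁ + b₂) (c₁ + c₂) := by
  obtain ⟨ha₁, hb₁, hc₁, hJ₁⟩ := h₁
  obtain ⟨ha₂, hb₂, hc₂, hJ₂⟩ := h₂
  refine ⟨by linarith, by linarith, by linarith, ?_⟩
  rcases eq_or_lt_of_le ha₁ with h1 | h1
  · subst h1
    have hb1 : b₁ = 0 := by nlinarith
    subst hb1
    nlinarith [mul_nonneg hc₁ ha₂]
  rcases eq_or_lt_of_le ha₂ with h2 | h2
  · subst h2
    have hb2 : b₂ = 0 := by nlinarith
    subst hb2
    nlinarith [mul_nonneg hc₂ ha₁]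
  nlinarith [sq_nonneg (b₁ * a₂ - b₂ * a₁), mul_pos h1 h2,
    mul_nonneg (mul_nonneg (le_of_lt h2) (le_of_lt h2)) (sub_nonneg.2 hJ₁),
    mul_nonneg (mul_nonneg (le_of_lt h1) (le_of_lt h1)) (sub_nonneg.2 hJ₂)]

/-- multiplication of the underlying function by `t`. -/
lemma Jok.tmul {C a b c : ℝ} (h : Jok C a b c) : Jok (C + 3) a (a + b) (2 * b + c) := by
  obtain ⟨ha, hb, hc, hJ⟩ := h
  exact ⟨ha, by linarith, by linarith, by nlinarith⟩

/-- multiplication of the underlying function by `(1-pt)⁻¹`. -/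
lemma Jok.gmul {C a b c p q A B D : ℝ} (h : Jok C a b c) (hp : 0 ≤ p) (hq : 0 < q)
    (hA : q * A = a) (hB : q * B = p * A + b) (hD : q * D = 2 * p * B + c) :
    Jok (C + 1) A B D := by
  obtain ⟨ha, hb, hc, hJ⟩ := h
  have hA0 : 0 ≤ A := nonneg_of_mul_nonneg_right (hA ▸ ha) hq
  have hB0 : 0 ≤ B := nonneg_of_mul_nonneg_right (hB ▸ by positivity) hq
  have hD0 : 0 ≤ D := nonneg_of_mul_nonneg_right (hD ▸ by positivity) hq
  refine ⟨hA0, hB0, hD0, ?_⟩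
  have hb' : b = q * B - p * A := by linarith
  have ha' : a = q * A := hA.symm
  have hc' : c = q * D - 2 * p * B := by linarith
  rw [hb', ha', hc'] at hJ
  nlinarith [mul_pos hq hq, sq_nonneg ((p - q) * A), hJ]

lemma Jok.sum {ι : Type*} (S : Finset ι) (C : ℝ) (a b c : ι → ℝ)
    (h : ∀ i ∈ S, Jok C (a i) (b i) (c i)) :
    Jok C (∑ i ∈ S, a i) (∑ i ∈ S, b i) (∑ i ∈ S, c i) := by
  classical
  induction S using Finset.induction_on with
  | empty => simpa using Jok.zero C
  | @insert x T hx IH =>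
    rw [Finset.sum_insert hx, Finset.sum_insert hx, Finset.sum_insert hx]
    exact (h x (Finset.mem_insert_self x T)).add
      (IH fun i hi => h i (Finset.mem_insert_of_mem hi))

end JokAux

open Finset in
theorem stmt_17 (s : ℕ) (A : Matrix (Fin s) (Fin s) ℝ) (b : Fin s → ℝ) (r : ℝ)
    (hr : 0 < r)
    (hlow : ∀ i j, i < j → A i j = 0)
    (hoc1 : b ⬝ᵥ (fun _ => (1 : ℝ)) = 1)
    (hoc2 : b ⬝ᵥ A.mulVec (fun _ => (1 : ℝ)) = 1 / 2)
    (hN : IsUnit (1 + r • A).det)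
    (ham1 : ∀ i, 0 ≤ (1 + r • A)⁻¹.mulVec (fun _ => (1 : ℝ)) i)
    (ham2 : ∀ i j, 0 ≤ ((r • A) * (1 + r • A)⁻¹) i j)
    (ham3 : ∀ i, 0 ≤ ((1 + r • A)⁻¹ᵀ.mulVec b) i)
    (ham4 : 0 ≤ 1 - r * (b ⬝ᵥ (1 + r • A)⁻¹.mulVec (fun _ => (1 : ℝ)))) :
    r ≤ 2 * s := by
  classical
  rcases Nat.eq_zero_or_pos s with hs0 | hs0
  · exfalso; subst hs0
    simp [dotProduct] at hoc1
  set e : Fin s → ℝ := (fun _ => (1 : ℝ)) with he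
  set R : Matrix (Fin s) (Fin s) ℝ := r • A with hR
  set N : Matrix (Fin s) (Fin s) ℝ := (1 + R)⁻¹ with hNdef
  have hNl : (1 + R) * N = 1 := Matrix.mul_nonsing_inv _ hN
  have hNr : N * (1 + R) = 1 := Matrix.nonsing_inv_mul _ hN
  have hcomm : N * R = R * N := by
    calc N * R = N * R * ((1 + R) * N) := by rw [hNl, mul_one]
      _ = N * ((1 + R) * R) * N := by noncomm_ring
      _ = (N * (1 + R)) * (R * N) := by noncomm_ring
      _ = R * N := by rw [hNr, one_mul]
  set P : Matrix (Fin s) (Fin s) ℝ := R * N with hPdef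
  have hNP : N = 1 - P := by
    have h1 : N + P = 1 := by
      calc N + P = (1 + R) * N := by rw [hPdef]; noncomm_ring
        _ = 1 := hNl
    rw [← h1]; noncomm_ring
  -- triangularity
  have hlowR : ∀ i j : Fin s, i < j → R i j = 0 := by
    intro i j hij
    rw [hR]
    simp [Matrix.smul_apply, hlow i j hij]
  have hRtri : R.BlockTriangular (fun i => OrderDual.toDual i) := by
    intro i j hij
    exact hlowR i j hij
  have h1Rtri : (1 + R).BlockTriangular (fun i => OrderDual.toDual i) :=
    Matrix.blockTriangular_one.add hRtri
  have : Invertible (1 + R) := (1 + R).invertibleOfIsUnitDet hN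
  have hNtri : N.BlockTriangular (fun i => OrderDual.toDual i) :=
    Matrix.blockTriangular_inv_of_blockTriangular h1Rtri
  have hPtri : P.BlockTriangular (fun i => OrderDual.toDual i) := hRtri.mul hNtri
  have hlowP : ∀ i j : Fin s, i < j → P i j = 0 := fun i j hij => hPtri hij
  have hlowN : ∀ i j : Fin s, i < j → N i j = 0 := fun i j hij => hNtri hij
  -- vectors
  set y : Fin s → ℝ := N.mulVec e with hy
  set z : Fin s → ℝ := Nᵀ.mulVec b with hzdef
  set g : Fin s → ℝ := R.mulVec e with hg
  set g2 : Fin s → ℝ := fun i => 2 * (R.mulVec g) i with hg2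
  have hy0 : ∀ i, 0 ≤ y i := ham1
  have hz0 : ∀ i, 0 ≤ z i := ham3
  have hP0 : ∀ i j, 0 ≤ P i j := ham2
  -- matrix identities
  have hid2 : N.mulVec g = P.mulVec e := by
    rw [hg, Matrix.mulVec_mulVec, hcomm]
  have hid3 : N.mulVec g2 = fun i => 2 * ((P.mulVec g) i) := by
    have h1 : N.mulVec (R.mulVec g) = P.mulVec g := by
      rw [Matrix.mulVec_mulVec, hcomm]
    funext i
    have h2 : g2 = fun j => 2 * (R.mulVec g) j := hg2
    calc (N.mulVec g2) i = ∑ j, N i j * (2 * (R.mulVec g) j) := by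
          rw [h2]; rfl
      _ = 2 * ∑ j, N i j * (R.mulVec g) j := by
          rw [Finset.mul_sum]; congr 1; funext j; ring
      _ = 2 * (N.mulVec (R.mulVec g)) i := rfl
      _ = 2 * (P.mulVec g) i := by rw [h1]
  -- row splitting
  set Sf : (Fin s → ℝ) → Fin s → ℝ :=
    fun v i => ∑ j ∈ Finset.univ.filter (fun j => j < i), P i j * v j with hSf
  have hPsplit : ∀ (v : Fin s → ℝ) (i : Fin s),
      (P.mulVec v) i = P i i * v i + Sf v i := by
    intro v i
    have h0 : (P.mulVec v) i = ∑ j, P i j * v j := rfl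
    rw [h0, ← Finset.sum_filter_add_sum_filter_not Finset.univ (fun j => j < i)]
    have h2 : ∑ j ∈ Finset.univ.filter (fun j => ¬ j < i), P i j * v j = P i i * v i := by
      apply Finset.sum_eq_single_of_mem i (by simp)
      intro j hj hji
      have hij : i < j :=
        lt_of_le_of_ne (not_lt.mp (Finset.mem_filter.mp hj).2) (Ne.symm hji)
      rw [hlowP i j hij, zero_mul]
    rw [h2, hSf]
    ring
  have hrow : ∀ (v u : Fin s → ℝ), N.mulVec v = u → ∀ i,
      (1 - P i i) * v i = u i + Sf v i := by
    intro v u huv i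
    have h3 := congrFun huv i
    rw [hNP, Matrix.sub_mulVec, Matrix.one_mulVec] at h3
    have h4 : v i - (P.mulVec v) i = u i := h3
    have h5 := hPsplit v i
    linarith
  have hSnn : ∀ (v : Fin s → ℝ), (∀ j, 0 ≤ v j) → ∀ i, 0 ≤ Sf v i := by
    intro v hv i
    rw [hSf]
    exact Finset.sum_nonneg fun j _ => mul_nonneg (hP0 i j) (hv j)
  -- q_i positive
  have hqpos : ∀ i, 0 < 1 - P i i := by
    intro i
    have h1 : (1 : ℝ) - P i i = y i + Sf e i := by
      have := hrow e y rfl i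
      have he1 : e i = 1 := rfl
      rw [he1] at this
      linarith
    have h2 : 0 ≤ (1:ℝ) - P i i := by
      rw [h1]
      have : 0 ≤ Sf e i := hSnn e (fun j => zero_le_one) i
      linarith [hy0 i]
    have h3 : N i i * (1 + R) i i = 1 := by
      have h4 := congrFun (congrFun hNr i) i
      rw [Matrix.mul_apply] at h4
      rw [Finset.sum_eq_single_of_mem i (Finset.mem_univ i)] at h4
      · rw [h4]; simp [Matrix.one_apply]
      · intro j _ hji
        rcases lt_or_gt_of_ne hji with hlt | hgt
        · have : (1 + R) j i = 0 := by
            rw [Matrix.add_apply, Matrix.one_apply_ne hji, hlowR j i hlt]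
            ring
          rw [this, mul_zero]
        · rw [hlowN i j hgt, zero_mul]
    have h5 : N i i = 1 - P i i := by
      rw [hNP]
      simp [Matrix.sub_apply, Matrix.one_apply]
    rcases eq_or_lt_of_le h2 with h6 | h6
    · exfalso
      rw [h5, ← h6, zero_mul] at h3
      exact zero_ne_one h3
    · exact h6
  -- strong induction
  have key : ∀ n : ℕ, ∀ i : Fin s, (i : ℕ) < n → Jok (4 * (i:ℕ) + 1 : ℝ) 1 (g i) (g2 i) := by
    intro n
    induction n with
    | zero => intro i hi; omega
    | succ n IHn =>
      intro i hi
      by_cases hin : (i : ℕ) < n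
      · exact IHn i hin
      have IH : ∀ j : Fin s, j < i → Jok (4 * (j:ℕ) + 1 : ℝ) 1 (g j) (g2 j) := by
        intro j hj
        exact IHn j (by omega)
      set T := Finset.univ.filter (fun j => j < i) with hT
      have hsumJ : Jok (4 * (i:ℕ) : ℝ) (y i + ∑ j ∈ T, P i j * 1)
          (∑ j ∈ T, P i j * (1 + g j)) (∑ j ∈ T, P i j * (2 * g j + g2 j)) := by
        have hbase : Jok (4 * (i:ℕ) : ℝ) (∑ j ∈ T, P i j * 1)
            (∑ j ∈ T, P i j * (1 + g j)) (∑ j ∈ T, P i j * (2 * g j + g2 j)) := by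
          apply Jok.sum
          intro j hj
          have hji : j < i := (Finset.mem_filter.mp hj).2
          have h1 := (IH j hji).tmul
          have h2 : (4 * (j:ℕ) + 1 + 3 : ℝ) ≤ 4 * (i:ℕ) := by
            have hnat : (j:ℕ) + 1 ≤ (i:ℕ) := hji
            have hc : ((j:ℕ) : ℝ) + 1 ≤ ((i:ℕ) : ℝ) := by exact_mod_cast hnat
            linarith
          exact (h1.mono h2).smul (hP0 i j)
        have hconst : Jok (4 * (i:ℕ) : ℝ) (y i) 0 0 :=
          Jok.const (by positivity) (hy0 i)
        have h3 := hconst.add hbase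
        rw [zero_add, zero_add] at h3
        exact h3
      -- recursion identities
      have hA1 : (1 - P i i) * 1 = y i + ∑ j ∈ T, P i j * 1 := by
        have h1 := hrow e y rfl i
        have he1 : e i = 1 := rfl
        rw [he1] at h1
        have h2 : Sf e i = ∑ j ∈ T, P i j * 1 := by
          rw [hSf, hT]
        rw [mul_one]
        rw [h2] at h1
        linarith
      have hB1 : (1 - P i i) * g i = P i i * 1 + ∑ j ∈ T, P i j * (1 + g j) := by
        have h1 := hrow g (P.mulVec e) hid2 i
        have h2 := hPsplit e i
        have he1 : e i = 1 := rfl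
        rw [he1, mul_one] at h2
        have h3 : ∑ j ∈ T, P i j * (1 + g j) = Sf e i + Sf g i := by
          rw [hSf, hT, ← Finset.sum_add_distrib]
          congr 1; funext j
          have : e j = 1 := rfl
          rw [this]; ring
        rw [h3, mul_one]
        rw [h1, h2]
        ring
      have hD1 : (1 - P i i) * g2 i = 2 * P i i * g i + ∑ j ∈ T, P i j * (2 * g j + g2 j) := by
        have h1 := hrow g2 _ hid3 i
        have h2 := hPsplit g i
        have h3 : ∑ j ∈ T, P i j * (2 * g j + g2 j) = 2 * Sf g i + Sf g2 i := by
          rw [hSf, hT, Finset.mul_sum, ← Finset.sum_add_distrib]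
          congr 1; funext j
          ring
        rw [h3, h1, h2]
        ring
      have hres := hsumJ.gmul (hP0 i i) (hqpos i) hA1 hB1 hD1
      have hco : (4 * (i:ℕ) : ℝ) + 1 = (4 * (i:ℕ) + 1 : ℝ) := by ring
      rw [hco] at hres
      exact hres
  have key' : ∀ i : Fin s, Jok (4 * (i:ℕ) + 1 : ℝ) 1 (g i) (g2 i) :=
    fun i => key ((i:ℕ)+1) i (by omega)
  -- master inequality
  have master : Jok (4 * s - 3 : ℝ) (∑ i, z i * 1) (∑ i, z i * g i) (∑ i, z i * g2 i) := by
    apply Jok.sum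
    intro i _
    have h1 : (4 * (i:ℕ) + 1 : ℝ) ≤ 4 * s - 3 := by
      have hnat : (i:ℕ) + 1 ≤ s := i.isLt
      have hc : ((i:ℕ) : ℝ) + 1 ≤ (s : ℝ) := by exact_mod_cast hnat
      linarith
    exact ((key' i).mono h1).smul (hz0 i)
  -- scalar identities
  have hzdot : ∀ v : Fin s → ℝ, z ⬝ᵥ v = b ⬝ᵥ (N.mulVec v) := by
    intro v
    rw [hzdef, Matrix.mulVec_transpose, ← Matrix.dotProduct_mulVec]
  set m : ℝ := ∑ i, z i * 1 with hm
  set G : ℝ := ∑ i, z i * g i with hG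
  set H : ℝ := ∑ i, z i * g2 i with hH
  have hsum1 : m + G = 1 := by
    have h1 : m + G = z ⬝ᵥ (e + g) := by
      rw [hm, hG]
      simp [dotProduct, Pi.add_apply, Finset.sum_add_distrib, he, mul_add]
    rw [h1]
    have h2 : e + g = (1 + R).mulVec e := by
      rw [Matrix.add_mulVec, Matrix.one_mulVec]
    rw [h2, hzdot, Matrix.mulVec_mulVec, hNr, Matrix.one_mulVec]
    exact hoc1
  have hsum2 : 2 * G + H = r := by
    have h1 : 2 * G + H = 2 * (z ⬝ᵥ ((1 + R).mulVec g)) := by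
      calc 2 * G + H = ∑ x, 2 * (z x * (g x + (R.mulVec g) x)) := by
            rw [hG, hH, Finset.mul_sum, ← Finset.sum_add_distrib]
            apply Finset.sum_congr rfl
            intro x _
            rw [congrFun hg2 x]
            ring
        _ = 2 * ∑ x, z x * (g x + (R.mulVec g) x) := by rw [Finset.mul_sum]
        _ = 2 * (z ⬝ᵥ (g + R.mulVec g)) := rfl
        _ = 2 * (z ⬝ᵥ ((1 + R).mulVec g)) := by rw [Matrix.add_mulVec, Matrix.one_mulVec]
    rw [h1, hzdot, Matrix.mulVec_mulVec, hNr, Matrix.one_mulVec]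
    have h3 : b ⬝ᵥ g = r * (b ⬝ᵥ A.mulVec e) := by
      rw [hg, hR, Matrix.smul_mulVec, dotProduct_smul]
      rfl
    rw [h3, hoc2]
    ring
  have hsum4 : r * m ≤ 1 := by
    have h1 : m = b ⬝ᵥ (N.mulVec e) := by
      rw [hm]
      have : ∑ i, z i * 1 = z ⬝ᵥ e := by simp [dotProduct, he]
      rw [this, hzdot]
    rw [h1]
    linarith [ham4]
  -- final arithmetic
  obtain ⟨hm0, hG0, hH0, hJ⟩ := master
  have hs1 : (1:ℝ) ≤ s := by exact_mod_cast hs0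
  have hG1 : G = 1 - m := by linarith
  have hH1 : H = r - 2 * G := by linarith
  rw [hG1, hH1, hG1] at hJ
  -- hJ : (1-m)^2 + 2*m*(1-m) ≤ (r - 2*(1-m))*m + (4s-3)*m^2
  have hmpos : 0 < m := by
    rcases eq_or_lt_of_le hm0 with h | h
    · exfalso; rw [← h] at hJ; nlinarith
    · exact h
  have h2sm : 1 ≤ 2 * s * m := by nlinarith
  nlinarith
end

section
/- The s-stage method given by A_opt with entries (A_opt)_{ii} = 1/(2s), (A_opt)_{ij} = 1/s for i > j, (A_opt)_{ij} = 0 for i < j, and b_opt = (1/s, ..., 1/s)^T, together with r = 2s, satisfies the second-order conditions b^T e = 1, b^T A e = 1/2 and all the absolute monotonicity conditions: I + rA invertible, (I+rA)^{-1}e ≥ 0, rA(I+rA)^{-1} ≥ 0, b^T(I+rA)^{-1} ≥ 0, 1 - r b^T(I+rA)^{-1}e ≥ 0. In particular the bound r = 2s is attained. -/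
/-!
Let `L` be the lower-triangular all-ones matrix and `S` the subdiagonal shift. Then
`I + 2s A_opt = 2L` and `L⁻¹ = I - S`, so `(I + rA)⁻¹ = (I - S)/2` and `rA (I + rA)⁻¹ = (I + S)/2`.
Since `L e₁ = e` and `e_sᵀ L = eᵀ`, also `(I + rA)⁻¹ e = e₁/2` and `bᵀ (I + rA)⁻¹ = e_sᵀ/(2s)`:
every quantity in the absolute monotonicity conditions is entrywise nonnegative, and
`r bᵀ (I + rA)⁻¹ e = 1`, so the last condition holds with equality.
-/

open Matrix Finset

theorem Fin.sum_ite_val_eq {M : Type*} [AddCommMonoid M] {n : ℕ} (m : ℕ) (f : Fin n → M) :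
    ∑ k : Fin n, (if (k : ℕ) = m then f k else 0) = if h : m < n then f ⟨m, h⟩ else 0 := by
  split_ifs with h
  · simp_rw [← Fin.ext_iff (b := ⟨m, h⟩), Finset.sum_ite_eq', Finset.mem_univ, if_true]
  · exact Finset.sum_eq_zero fun k _ => if_neg (by omega)

theorem Fin.sum_two_mul_add_one (n : ℕ) : ∑ i : Fin n, (2 * (i : ℝ) + 1) = n ^ 2 := by
  induction n with
  | zero => simp
  | succ n ih =>
    rw [Fin.sum_univ_castSucc]
    simp only [Fin.val_castSucc, ih, Fin.val_last]
    push_cast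
    ring

section

variable (R : Type*) (n : ℕ)

def lowerOnes [Zero R] [One R] : Matrix (Fin n) (Fin n) R :=
  of fun i j => if j ≤ i then 1 else 0

def subdiagShift [Zero R] [One R] : Matrix (Fin n) (Fin n) R :=
  of fun i j => if (i : ℕ) = j + 1 then 1 else 0

variable {R n}

theorem subdiagShift_nonneg [Zero R] [One R] [Preorder R] [ZeroLEOneClass R] (i j : Fin n) :
    0 ≤ subdiagShift R n i j := by
  rw [subdiagShift, of_apply]
  split_ifs <;> simp

theorem lowerOnes_mul_subdiagShift [NonAssocSemiring R] (i j : Fin n) :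
    (lowerOnes R n * subdiagShift R n) i j = if j < i then 1 else 0 := by
  simp only [mul_apply, lowerOnes, subdiagShift, of_apply, mul_ite, mul_one, mul_zero,
    Fin.sum_ite_val_eq]
  split_ifs <;> simp only [Fin.le_def, Fin.lt_def] at * <;> first | rfl | omega

theorem lowerOnes_mul_one_sub_subdiagShift [Ring R] :
    lowerOnes R n * (1 - subdiagShift R n) = 1 := by
  ext i j
  rw [mul_sub, mul_one, Matrix.sub_apply, lowerOnes_mul_subdiagShift, one_apply, lowerOnes,
    of_apply]
  split_ifs <;> simp only [Fin.le_def, Fin.lt_def, Fin.ext_iff] at * <;>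
    first | (exfalso; omega) | simp

theorem smul_lowerOnes_mul_inv_smul {K : Type*} [Field K] {c : K} (hc : c ≠ 0) :
    c • lowerOnes K n * c⁻¹ • (1 - subdiagShift K n) = 1 := by
  rw [smul_mul_smul, mul_inv_cancel₀ hc, lowerOnes_mul_one_sub_subdiagShift, one_smul]

theorem lowerOnes_mulVec_single_zero [NonAssocSemiring R] (hn : 0 < n) :
    lowerOnes R n *ᵥ Pi.single ⟨0, hn⟩ 1 = 1 := by
  ext i
  rw [mulVec_single_one, col_apply, lowerOnes, of_apply, Pi.one_apply]
  exact if_pos (show (⟨0, hn⟩ : Fin n) ≤ i from Nat.zero_le _)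

theorem single_last_vecMul_lowerOnes [NonAssocSemiring R] (hn : 0 < n) :
    Pi.single ⟨n - 1, by omega⟩ 1 ᵥ* lowerOnes R n = 1 := by
  ext j
  rw [single_one_vecMul, row_apply, lowerOnes, of_apply, Pi.one_apply]
  exact if_pos (show j ≤ ⟨n - 1, _⟩ from Nat.le_sub_one_of_lt j.2)

theorem one_sub_subdiagShift_mulVec_one [CommRing R] (hn : 0 < n) :
    (1 - subdiagShift R n) *ᵥ 1 = Pi.single ⟨0, hn⟩ 1 := by
  rw [← lowerOnes_mulVec_single_zero hn, mulVec_mulVec,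
    mul_eq_one_comm.mp lowerOnes_mul_one_sub_subdiagShift, one_mulVec]

theorem one_vecMul_one_sub_subdiagShift [Ring R] (hn : 0 < n) :
    1 ᵥ* (1 - subdiagShift R n) = Pi.single ⟨n - 1, by omega⟩ 1 := by
  rw [← single_last_vecMul_lowerOnes hn, vecMul_vecMul, lowerOnes_mul_one_sub_subdiagShift,
    vecMul_one]

theorem lowerOnes_mulVec_one [NonAssocSemiring R] (i : Fin n) :
    (lowerOnes R n *ᵥ 1) i = (i : ℕ) + 1 := by
  simp [lowerOnes, mulVec, dotProduct, Finset.sum_boole, filter_ge_eq_Iic]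

end

section IteratedMidpoint

variable {s : ℕ}

noncomputable def iteratedMidpointA (s : ℕ) : Matrix (Fin s) (Fin s) ℝ :=
  fun i j => if i = j then 1 / (2 * s) else if j < i then 1 / s else 0

noncomputable def iteratedMidpointB (s : ℕ) : Fin s → ℝ :=
  fun _ => 1 / s

theorem iteratedMidpointB_eq : iteratedMidpointB s = (s : ℝ)⁻¹ • 1 := by
  ext
  simp [iteratedMidpointB]

theorem smul_iteratedMidpointA :
    (2 * s : ℝ) • iteratedMidpointA s = (2 : ℝ) • lowerOnes ℝ s - 1 := by
  ext i j
  have : (s : ℝ) ≠ 0 := Nat.cast_ne_zero.2 i.pos.ne'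
  simp only [iteratedMidpointA, lowerOnes, Matrix.smul_apply, Matrix.sub_apply, one_apply,
    of_apply, smul_eq_mul]
  rcases lt_trichotomy i j with hij | rfl | hji
  · simp [hij.ne, hij.not_gt, hij.not_ge]
  · simp
    field_simp
    norm_num
  · simp [hji.ne', hji, hji.le]
    field_simp

theorem iteratedMidpointB_dotProduct_mulVec_one (hs : 0 < s) :
    iteratedMidpointB s ⬝ᵥ iteratedMidpointA s *ᵥ 1 = 1 / 2 := by
  rw [← inv_smul_smul₀ (by positivity : (2 * s : ℝ) ≠ 0) (iteratedMidpointA s),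
    smul_iteratedMidpointA, iteratedMidpointB_eq, smul_mulVec, sub_mulVec, smul_mulVec,
    one_mulVec, smul_dotProduct, dotProduct_smul, one_dotProduct]
  simp only [Pi.sub_apply, Pi.smul_apply, lowerOnes_mulVec_one, smul_eq_mul, Pi.one_apply]
  rw [Finset.sum_congr rfl fun (i : Fin s) _ => show 2 * ((i : ℝ) + 1) - 1 = 2 * i + 1 by ring,
    Fin.sum_two_mul_add_one]
  field_simp

theorem one_add_smul_iteratedMidpointA_mul :
    (1 + (2 * s : ℝ) • iteratedMidpointA s) * (2 : ℝ)⁻¹ • (1 - subdiagShift ℝ s) = 1 := by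
  rw [smul_iteratedMidpointA, add_sub_cancel, smul_lowerOnes_mul_inv_smul two_ne_zero]

theorem inv_one_add_smul_iteratedMidpointA :
    (1 + (2 * s : ℝ) • iteratedMidpointA s)⁻¹ = (2 : ℝ)⁻¹ • (1 - subdiagShift ℝ s) :=
  inv_eq_right_inv (one_add_smul_iteratedMidpointA_mul)

theorem smul_iteratedMidpointA_mul_inv :
    (2 * s : ℝ) • iteratedMidpointA s * (1 + (2 * s : ℝ) • iteratedMidpointA s)⁻¹ =
      (2 : ℝ)⁻¹ • (1 + subdiagShift ℝ s) := by
  set M := 1 + (2 * s : ℝ) • iteratedMidpointA s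
  calc (2 * s : ℝ) • iteratedMidpointA s * M⁻¹ = (M - 1) * M⁻¹ := by rw [add_sub_cancel_left]
    _ = M * M⁻¹ - M⁻¹ := by rw [sub_mul, one_mul]
    _ = (2 : ℝ)⁻¹ • (1 + subdiagShift ℝ s) := by
      rw [inv_one_add_smul_iteratedMidpointA, one_add_smul_iteratedMidpointA_mul]
      module

end IteratedMidpoint

theorem stmt_18 (s : ℕ) (hs : 0 < s) :
    let Aopt : Matrix (Fin s) (Fin s) ℝ :=
      fun i j => if i = j then 1 / (2 * s) else if j < i then 1 / s else 0
    let bopt : Fin s → ℝ := fun _ => 1 / s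
    let e : Fin s → ℝ := fun _ => 1
    let r : ℝ := 2 * s
    bopt ⬝ᵥ e = 1 ∧
    bopt ⬝ᵥ Aopt.mulVec e = 1 / 2 ∧
    IsUnit (1 + r • Aopt).det ∧
    (∀ i, 0 ≤ (1 + r • Aopt)⁻¹.mulVec e i) ∧
    (∀ i j, 0 ≤ ((r • Aopt) * (1 + r • Aopt)⁻¹) i j) ∧
    (∀ i, 0 ≤ ((1 + r • Aopt)⁻¹ᵀ.mulVec bopt) i) ∧
    0 ≤ 1 - r * (bopt ⬝ᵥ (1 + r • Aopt)⁻¹.mulVec e) := by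
  intro A b e r
  have hN : (1 + r • A)⁻¹ = (2 : ℝ)⁻¹ • (1 - subdiagShift ℝ s) :=
    inv_one_add_smul_iteratedMidpointA
  have hb : b = (s : ℝ)⁻¹ • 1 := iteratedMidpointB_eq
  have he : e = 1 := rfl
  have hsingle (j : Fin s) : 0 ≤ (Pi.single j 1 : Fin s → ℝ) := Pi.single_nonneg.2 zero_le_one
  refine ⟨?_, iteratedMidpointB_dotProduct_mulVec_one hs,
    isUnit_det_of_right_inverse (one_add_smul_iteratedMidpointA_mul), fun i => ?_,
    fun i j => ?_, fun i => ?_, ?_⟩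
  · simp [hb, he, dotProduct, hs.ne']
  · rw [hN, he, smul_mulVec, one_sub_subdiagShift_mulVec_one hs]
    exact smul_nonneg (by norm_num) (hsingle _) i
  · rw [show r • A * (1 + r • A)⁻¹ = _ from smul_iteratedMidpointA_mul_inv,
      Matrix.smul_apply, Matrix.add_apply]
    exact smul_nonneg (by norm_num) (add_nonneg (zero_le_one_elem i j) (subdiagShift_nonneg i j))
  · rw [hN, hb, mulVec_transpose, vecMul_smul, smul_vecMul, one_vecMul_one_sub_subdiagShift hs]
    exact smul_nonneg (by norm_num) (smul_nonneg (by positivity) (hsingle _)) i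
  · have hattained : r * (b ⬝ᵥ (1 + r • A)⁻¹ *ᵥ e) = 1 := by
      rw [hN, hb, he, smul_mulVec, one_sub_subdiagShift_mulVec_one hs, smul_dotProduct,
        dotProduct_smul, dotProduct_single]
      simp [r]
      field_simp
    rw [hattained, sub_self]
end
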